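/- arXiv:2307.10729 — 2 statements merged into one kernel-verified Lean document; each statement's English description precedes it below -/
import Mathlib

section
/- Let m ∈ ℕ, let V = V⁺ ∪ V⁻ be a partition of the m qubit indices, and for a ∈ {0,1}^m define φ(a) = |a restricted to V⁺| − |a restricted to V⁻| (difference of Hamming weights). Suppose S ⊆ {0,1}^m is a subgroup (under XOR) and L ∈ {0,1}^m satisfies: for all s ∈ S and x ∈ {0,1}, φ(s + xL) ≡ 7x (mod 8). Then applying T on all qubits in V⁺ and T† on all qubits in V⁻ maps the state |x̄⟩ = |S|^{-1/2} Σ_{s∈S} |s + xL⟩ to e^{−iπx/4}|x̄⟩, i.e., it implements a logical T† gate (equivalently a logical T up to relabeling) on the code spanned by |0̄⟩, |1̄⟩. -/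
/-- `φ(a)` = (Hamming weight of `a` on `V⁺`) − (Hamming weight of `a` on `V⁻`). -/
def phiSigned {m : ℕ} (Vp Vm : Finset (Fin m)) (a : Fin m → ZMod 2) : ℤ :=
  ((Vp.filter fun v => a v = 1).card : ℤ) - ((Vm.filter fun v => a v = 1).card : ℤ)

-- The CSS codeword `|x̄⟩ = |S|^{-1/2} Σ_{s∈S} |s + xL⟩`, given by its amplitudes.
open Classical in
noncomputable def codeword {m : ℕ} (S : AddSubgroup (Fin m → ZMod 2))
    (L : Fin m → ZMod 2) (x : ZMod 2) : (Fin m → ZMod 2) → ℂ :=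
  fun a => if a + x • L ∈ S then (Real.sqrt (Nat.card S) : ℂ)⁻¹ else 0

/-
On the support of `|x̄⟩` every basis vector has the form `a = s + xL` with `s ∈ S`, because
`2xL = 0`. The hypothesis then gives `φ(a) ≡ 7x ≡ -x (mod 8)`, and `e^{iπφ/4}` depends only on
`φ` modulo 8, so the diagonal phase acts on `|x̄⟩` as the scalar `e^{-iπx/4}`.
-/

open Complex in
theorem exp_pi_mul_I_mul_div_four_congr {p q : ℤ} (h : p ≡ q [ZMOD 8]) :
    exp (Real.pi * I * p / 4) = exp (Real.pi * I * q / 4) := by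
  obtain ⟨k, hk⟩ := Int.modEq_iff_dvd.mp h.symm
  refine exp_eq_exp_iff_exists_int.mpr ⟨k, ?_⟩
  rw [show (p : ℂ) = q + 8 * k by exact_mod_cast (by linarith : p = q + 8 * k)]
  ring

theorem phiSigned_modEq_neg_val_of_mem {m : ℕ} {Vp Vm : Finset (Fin m)}
    {S : AddSubgroup (Fin m → ZMod 2)} {L : Fin m → ZMod 2}
    (h : ∀ s ∈ S, ∀ x : ZMod 2, phiSigned Vp Vm (s + x • L) ≡ 7 * (x.val : ℤ) [ZMOD 8])
    {x : ZMod 2} {a : Fin m → ZMod 2} (hs : a + x • L ∈ S) :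
    phiSigned Vp Vm a ≡ -(x.val : ℤ) [ZMOD 8] := by
  have hphi := h _ hs x
  rw [add_assoc, ← two_nsmul, ZModModule.char_nsmul_eq_zero, add_zero] at hphi
  exact hphi.trans (Int.modEq_iff_dvd.mpr ⟨-x.val, by ring⟩)

theorem stmt1_general {m : ℕ} (Vp Vm : Finset (Fin m))
    (S : AddSubgroup (Fin m → ZMod 2)) (L : Fin m → ZMod 2)
    (h : ∀ s ∈ S, ∀ x : ZMod 2,
      phiSigned Vp Vm (s + x • L) ≡ 7 * (x.val : ℤ) [ZMOD 8]) :
    ∀ (x : ZMod 2) (a : Fin m → ZMod 2),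
      Complex.exp (Real.pi * Complex.I * (phiSigned Vp Vm a : ℂ) / 4) * codeword S L x a =
        Complex.exp (-(Real.pi * Complex.I * (x.val : ℂ)) / 4) * codeword S L x a := by
  intro x a
  by_cases hs : a + x • L ∈ S
  · rw [exp_pi_mul_I_mul_div_four_congr (phiSigned_modEq_neg_val_of_mem h hs)]
    congr 2
    push_cast
    ring
  · simp only [codeword, if_neg hs, mul_zero]

/-- If `φ(s + xL) ≡ 7x (mod 8)` for all stabilizers `s` and logical bits `x`, then the
transversal operator applying `T` on `V⁺` and `T†` on `V⁻` (which multiplies the basis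
vector `|a⟩` by `e^{iπφ(a)/4}`) maps `|x̄⟩` to `e^{-iπx/4}|x̄⟩`: a logical `T†`. -/
theorem stmt1 {m : ℕ} (Vp Vm : Finset (Fin m))
    (hdisj : Disjoint Vp Vm) (hunion : Vp ∪ Vm = Finset.univ)
    (S : AddSubgroup (Fin m → ZMod 2)) (L : Fin m → ZMod 2)
    (h : ∀ s ∈ S, ∀ x : ZMod 2,
      phiSigned Vp Vm (s + x • L) ≡ 7 * (x.val : ℤ) [ZMOD 8]) :
    ∀ (x : ZMod 2) (a : Fin m → ZMod 2),
      Complex.exp (Real.pi * Complex.I * (phiSigned Vp Vm a : ℂ) / 4) * codeword S L x a =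
        Complex.exp (-(Real.pi * Complex.I * (x.val : ℂ)) / 4) * codeword S L x a :=
  stmt1_general Vp Vm S L h
end

section
/- Let two CSS-type codewords be given: |x̄⟩ = |S|^{-1/2} Σ_{s∈S}|s + xL⟩ and |ȳ⟩ = |S|^{-1/2} Σ_{t∈S}|t + yL⟩ on m qubits each, where S ⊆ {0,1}^m is a subgroup and L ∉ S. Suppose applying T on V⁺ and T† on V⁻ sends each basis vector |s + xL⟩ to e^{iπx/4}|s + xL⟩ (phase depending only on the logical bit x). Then applying, transversally across the two blocks, the gate CS on each pair of corresponding qubits in V⁺ and CS† on each pair in V⁻ maps |x̄⟩⊗|ȳ⟩ to i^{xy}|x̄⟩⊗|ȳ⟩, i.e., implements the logical CS gate. -/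
/-- `ψ(a,b) = Σ_{v∈V⁺} a_v b_v − Σ_{v∈V⁻} a_v b_v`: the signed exponent accumulated by
transversal `CS` on `V⁺` and `CS†` on `V⁻` applied to `|a⟩ ⊗ |b⟩`. -/
def psiSigned {m : ℕ} (Vp Vm : Finset (Fin m)) (a b : Fin m → ZMod 2) : ℤ :=
  ((Vp.filter fun v => a v = 1 ∧ b v = 1).card : ℤ) -
    ((Vm.filter fun v => a v = 1 ∧ b v = 1).card : ℤ)

/-!
Coordinatewise over `ZMod 2`, `a_v + b_v = (a + b)_v + 2 a_v b_v`; summing with signs gives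
`2 ψ(a, b) = φ(a) + φ(b) - φ(a + b)`. For `a ∈ S + xL` and `b ∈ S + yL` we have
`a + b ∈ S + (x + y)L`, so the hypothesis evaluates the right side mod 8 to
`x + y - (x + y mod 2) = 2xy`. Hence `ψ(a, b) ≡ xy (mod 4)` and `i^ψ = i^{xy}`.
-/

lemma card_filter_add_card_filter_eq {ι : Type*} (W : Finset ι) (a b : ι → ZMod 2) :
    (W.filter fun v => a v = 1).card + (W.filter fun v => b v = 1).card
      = (W.filter fun v => (a + b) v = 1).card
        + 2 * (W.filter fun v => a v = 1 ∧ b v = 1).card := by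
  classical
  simp only [Finset.card_filter, ← Finset.sum_add_distrib, Finset.mul_sum]
  refine Finset.sum_congr rfl fun v _ => ?_
  rw [Pi.add_apply]
  generalize a v = p
  generalize b v = q
  fin_cases p <;> fin_cases q <;> decide

lemma two_mul_psiSigned {m : ℕ} (Vp Vm : Finset (Fin m)) (a b : Fin m → ZMod 2) :
    2 * psiSigned Vp Vm a b
      = phiSigned Vp Vm a + phiSigned Vp Vm b - phiSigned Vp Vm (a + b) := by
  have hp := card_filter_add_card_filter_eq Vp a b
  have hm := card_filter_add_card_filter_eq Vm a b
  unfold psiSigned phiSigned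
  omega

lemma val_add_val_sub_val_add (x y : ZMod 2) :
    (x.val : ℤ) + y.val - (x + y).val = 2 * (x.val * y.val) := by
  fin_cases x <;> fin_cases y <;> decide

lemma add_smul_add_smul_self {M : Type*} [AddCommGroup M] [Module (ZMod 2) M]
    (a c : M) (x : ZMod 2) : a + x • c + x • c = a := by
  rw [add_assoc, ← add_smul, CharTwo.add_self_eq_zero, zero_smul, add_zero]

lemma Complex.exp_pi_mul_I_mul_int_div_two (n : ℤ) :
    Complex.exp (Real.pi * Complex.I * n / 2) = Complex.I ^ n := by
  rw [show (Real.pi : ℂ) * Complex.I * n / 2 = n * (Real.pi / 2 * Complex.I) by ring,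
    Complex.exp_int_mul, Complex.exp_pi_div_two_mul_I]

lemma Complex.I_zpow_eq_of_modEq_four {n k : ℤ} (h : n ≡ k [ZMOD 4]) :
    Complex.I ^ n = Complex.I ^ k := by
  obtain ⟨j, hj⟩ := h.symm.dvd
  rw [show n = k + 4 * j by omega, zpow_add₀ Complex.I_ne_zero, zpow_mul,
    show Complex.I ^ (4 : ℤ) = 1 by simp [Complex.I_pow_four], one_zpow, mul_one]

section CosetPhase

variable {m : ℕ} {Vp Vm : Finset (Fin m)} {S : AddSubgroup (Fin m → ZMod 2)}
  {L : Fin m → ZMod 2}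

lemma phiSigned_modEq_of_mem
    (h : ∀ s ∈ S, ∀ x : ZMod 2, phiSigned Vp Vm (s + x • L) ≡ (x.val : ℤ) [ZMOD 8])
    {a : Fin m → ZMod 2} {x : ZMod 2} (ha : a + x • L ∈ S) :
    phiSigned Vp Vm a ≡ (x.val : ℤ) [ZMOD 8] := by
  simpa only [add_smul_add_smul_self] using h _ ha x

lemma psiSigned_modEq_of_mem
    (h : ∀ s ∈ S, ∀ x : ZMod 2, phiSigned Vp Vm (s + x • L) ≡ (x.val : ℤ) [ZMOD 8])
    {a b : Fin m → ZMod 2} {x y : ZMod 2} (ha : a + x • L ∈ S) (hb : b + y • L ∈ S) :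
    psiSigned Vp Vm a b ≡ (x.val * y.val : ℕ) [ZMOD 4] := by
  have hab : a + b + (x + y) • L ∈ S := by
    convert S.add_mem ha hb using 1
    rw [add_smul]
    abel
  have h2 : 2 * psiSigned Vp Vm a b ≡ 2 * (x.val * y.val) [ZMOD 8] := by
    rw [two_mul_psiSigned, ← val_add_val_sub_val_add]
    exact ((phiSigned_modEq_of_mem h ha).add (phiSigned_modEq_of_mem h hb)).sub
      (phiSigned_modEq_of_mem h hab)
  unfold Int.ModEq at h2 ⊢
  push_cast
  omega

end CosetPhase

theorem stmt2_general {m : ℕ} (Vp Vm : Finset (Fin m))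
    (S : AddSubgroup (Fin m → ZMod 2)) (L : Fin m → ZMod 2)
    (h : ∀ s ∈ S, ∀ x : ZMod 2,
      phiSigned Vp Vm (s + x • L) ≡ (x.val : ℤ) [ZMOD 8]) :
    ∀ (x y : ZMod 2) (a b : Fin m → ZMod 2),
      Complex.exp (Real.pi * Complex.I * (psiSigned Vp Vm a b : ℂ) / 2) *
          (codeword S L x a * codeword S L y b) =
        Complex.I ^ (x.val * y.val) * (codeword S L x a * codeword S L y b) := by
  intro x y a b
  by_cases ha : a + x • L ∈ S
  · by_cases hb : b + y • L ∈ S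
    · rw [Complex.exp_pi_mul_I_mul_int_div_two,
        Complex.I_zpow_eq_of_modEq_four (psiSigned_modEq_of_mem h ha hb), zpow_natCast]
    · simp [codeword, hb]
  · simp [codeword, ha]

/-- If the transversal `T(V⁺)T†(V⁻)` phase on each basis vector `|s + xL⟩` equals
`e^{iπx/4}` (i.e. `φ(s+xL) ≡ x (mod 8)`), then the transversal application of `CS` on the
pairs in `V⁺` and `CS†` on the pairs in `V⁻` — which multiplies `|a⟩⊗|b⟩` by
`i^{ψ(a,b)} = e^{iπψ(a,b)/2}` — maps `|x̄⟩⊗|ȳ⟩` to `i^{xy} |x̄⟩⊗|ȳ⟩`: the logical `CS`. -/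
theorem stmt2 {m : ℕ} (Vp Vm : Finset (Fin m))
    (hdisj : Disjoint Vp Vm) (hunion : Vp ∪ Vm = Finset.univ)
    (S : AddSubgroup (Fin m → ZMod 2)) (L : Fin m → ZMod 2) (hL : L ∉ S)
    (h : ∀ s ∈ S, ∀ x : ZMod 2,
      phiSigned Vp Vm (s + x • L) ≡ (x.val : ℤ) [ZMOD 8]) :
    ∀ (x y : ZMod 2) (a b : Fin m → ZMod 2),
      Complex.exp (Real.pi * Complex.I * (psiSigned Vp Vm a b : ℂ) / 2) *
          (codeword S L x a * codeword S L y b) =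
        Complex.I ^ (x.val * y.val) * (codeword S L x a * codeword S L y b) :=
  stmt2_general Vp Vm S L h
end
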